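/- For any nonnegative integer vector s = (s_1,…,s_d), the polynomial P_s(t) = (-1)^{|s|} det[(C(t_q, p-1-s_q))_{p,q}] satisfies the partial difference equation (Δ_1 + ⋯ + Δ_d) P_s = 0. -/
import Mathlib


/-- The binomial coefficient `C(t, k)` for integer arguments, with the
convention `C(t, k) = 0` for `k < 0`. -/
noncomputable def intChoose (t k : ℤ) : ℚ :=
  if 0 ≤ k then (∏ m ∈ Finset.range k.toNat, ((t : ℚ) - m)) / (Nat.factorial k.toNat) else 0

/-- `P_s(t) = (-1)^{|s|} det[(C(t_q, p-1-s_q))]`. -/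
noncomputable def Ps {d : ℕ} (s : Fin d → ℕ) (t : Fin d → ℤ) : ℚ :=
  (-1 : ℚ) ^ (∑ q, s q) *
    Matrix.det (Matrix.of fun p q : Fin d => intChoose (t q) (((p : ℕ) : ℤ) - (s q : ℤ)))

lemma intChoose_of_neg {t k : ℤ} (h : k < 0) : intChoose t k = 0 := by
  simp [intChoose, not_le.mpr h]

lemma intChoose_pascal (t k : ℤ) :
    intChoose t k = intChoose (t - 1) k + intChoose (t - 1) (k - 1) := by
  rcases lt_trichotomy k 0 with hk | hk | hk
  · rw [intChoose_of_neg hk, intChoose_of_neg hk, intChoose_of_neg (by omega)]; ring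
  · subst hk
    rw [intChoose_of_neg (by norm_num : (0:ℤ) - 1 < 0)]
    simp [intChoose]
  · have h0 : (0:ℤ) ≤ k := le_of_lt hk
    have h1 : (0:ℤ) ≤ k - 1 := by omega
    obtain ⟨j, hj⟩ : ∃ j : ℕ, k.toNat = j + 1 := ⟨k.toNat - 1, by omega⟩
    have hk1 : (k - 1).toNat = j := by omega
    rw [intChoose, intChoose, intChoose, if_pos h0, if_pos h0, if_pos h1, hj, hk1]
    have e1 : ∏ m ∈ Finset.range (j+1), ((t:ℚ) - m)
        = (∏ m ∈ Finset.range j, (((t - 1:ℤ):ℚ) - m)) * (t:ℚ) := by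
      rw [Finset.prod_range_succ']
      congr 1
      · apply Finset.prod_congr rfl
        intro i _
        push_cast
        ring
      · simp
    have e2 : ∏ m ∈ Finset.range (j+1), (((t - 1:ℤ):ℚ) - m)
        = (∏ m ∈ Finset.range j, (((t - 1:ℤ):ℚ) - m)) * ((t:ℚ) - 1 - j) := by
      rw [Finset.prod_range_succ]
      push_cast
      ring
    rw [e1, e2, Nat.factorial_succ]
    have hfj : ((Nat.factorial j : ℚ)) ≠ 0 := by exact_mod_cast Nat.factorial_ne_zero j
    have hj1 : ((j:ℚ) + 1) ≠ 0 := by positivity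
    push_cast
    field_simp
    ring

/-- `P_s` satisfies the partial difference equation `(Δ_1 + ⋯ + Δ_d) P_s = 0`. -/
theorem Ps_difference_eq_zero {d : ℕ} (s : Fin d → ℕ) (t : Fin d → ℤ) :
    ∑ q : Fin d, (Ps s t - Ps s (Function.update t q (t q - 1))) = 0 := by
  classical
  set c : ℚ := (-1 : ℚ) ^ (∑ q, s q) with hc
  set A : Matrix (Fin d) (Fin d) ℚ :=
    Matrix.of (fun p q : Fin d => intChoose (t q) (((p : ℕ) : ℤ) - (s q : ℤ))) with hA
  set W : Matrix (Fin d) (Fin d) ℚ :=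
    Matrix.of (fun p q : Fin d => intChoose (t q - 1) (((p : ℕ) : ℤ) - (s q : ℤ))) with hW
  set L : Matrix (Fin d) (Fin d) ℚ :=
    Matrix.of (fun p p' : Fin d => if (p:ℕ) = (p':ℕ) + 1 then (1:ℚ) else 0) with hL
  -- powers of the shift matrix
  have hLpow : ∀ (m : ℕ) (p p' : Fin d),
      (L ^ m) p p' = if (p:ℕ) = (p':ℕ) + m then (1:ℚ) else 0 := by
    intro m
    induction m with
    | zero =>
      intro p p'
      simp [Matrix.one_apply, Fin.ext_iff]
    | succ m ih =>
      intro p p'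
      rw [pow_succ', Matrix.mul_apply]
      by_cases h : (p:ℕ) = (p':ℕ) + (m + 1)
      · have hpd := p.isLt
        have hr : (p':ℕ) + m < d := by omega
        rw [if_pos h, Finset.sum_eq_single (⟨(p':ℕ) + m, hr⟩ : Fin d)]
        · have h1 : L p ⟨(p':ℕ) + m, hr⟩ = 1 := by
            simp only [hL, Matrix.of_apply]
            rw [if_pos (by simpa using by omega : (p:ℕ) = (((⟨(p':ℕ)+m, hr⟩ : Fin d)):ℕ) + 1)]
          have h2 : (L ^ m) ⟨(p':ℕ) + m, hr⟩ p' = 1 := by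
            rw [ih]; simp
          rw [h1, h2, one_mul]
        · intro r _ hr'
          by_cases hc1 : (p:ℕ) = (r:ℕ) + 1
          · have hne : ¬ ((r:ℕ) = (p':ℕ) + m) := by
              intro hcon
              exact hr' (Fin.ext (by simpa using hcon))
            rw [ih, if_neg hne, mul_zero]
          · have : L p r = 0 := by
              simp only [hL, Matrix.of_apply]
              rw [if_neg hc1]
            rw [this, zero_mul]
        · intro hmem; exact absurd (Finset.mem_univ _) hmem
      · rw [if_neg h]
        apply Finset.sum_eq_zero
        intro r _
        by_cases hc1 : (p:ℕ) = (r:ℕ) + 1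
        · rw [ih, if_neg (by omega), mul_zero]
        · have : L p r = 0 := by
            simp only [hL, Matrix.of_apply]
            rw [if_neg hc1]
          rw [this, zero_mul]
  have hL0 : L ^ d = 0 := by
    ext p p'
    rw [hLpow]
    have := p.isLt
    rw [if_neg (by omega)]
    simp
  have htr : ∀ m : ℕ, Matrix.trace (L ^ (m + 1)) = 0 := by
    intro m
    rw [Matrix.trace]
    apply Finset.sum_eq_zero
    intro p _
    rw [Matrix.diag_apply, hLpow, if_neg (by omega)]
  -- pointwise Pascal identity for the matrices
  have hAdd : ∀ (p q : Fin d), A p q = W p q + (L * W) p q := by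
    intro p q
    have hLW : (L * W) p q = intChoose (t q - 1) (((p:ℕ):ℤ) - (s q : ℤ) - 1) := by
      rcases Nat.eq_zero_or_pos (p:ℕ) with h0 | hpos
      · rw [Matrix.mul_apply, Finset.sum_eq_zero, intChoose_of_neg (by omega)]
        intro r _
        have : L p r = 0 := by
          simp only [hL, Matrix.of_apply]
          rw [if_neg (by omega)]
        rw [this, zero_mul]
      · obtain ⟨i, hi⟩ : ∃ i : ℕ, (p:ℕ) = i + 1 := ⟨(p:ℕ) - 1, by omega⟩
        have hid : i < d := by have := p.isLt; omega
        rw [Matrix.mul_apply, Finset.sum_eq_single (⟨i, hid⟩ : Fin d)]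
        · have h1 : L p ⟨i, hid⟩ = 1 := by
            simp only [hL, Matrix.of_apply]
            rw [if_pos (by simpa using by omega : (p:ℕ) = (((⟨i, hid⟩ : Fin d)):ℕ) + 1)]
          rw [h1, one_mul, hW]
          simp only [Matrix.of_apply]
          congr 1
          show (i : ℤ) - (s q : ℤ) = ((p:ℕ) : ℤ) - (s q : ℤ) - 1
          omega
        · intro r _ hr'
          have hrv : (r:ℕ) ≠ i := fun hcon => hr' (Fin.ext (by simp [hcon]))
          have : L p r = 0 := by
            simp only [hL, Matrix.of_apply]
            rw [if_neg (by omega)]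
          rw [this, zero_mul]
        · intro hmem; exact absurd (Finset.mem_univ _) hmem
    rw [hLW, hA, hW]
    simp only [Matrix.of_apply]
    exact intChoose_pascal (t q) _
  have hAW : A = (1 + L) * W := by
    ext p q
    rw [Matrix.add_mul, Matrix.one_mul, Matrix.add_apply]
    exact hAdd p q
  -- geometric series inverse
  set N : Matrix (Fin d) (Fin d) ℚ := ∑ k ∈ Finset.range d, (-L) ^ k with hN
  have hnegL : (-L) = (-1 : ℚ) • L := by simp
  have hNinv : N * (1 + L) = 1 := by
    have h1 : (∑ k ∈ Finset.range d, (-L) ^ k) * (-L - 1) = (-L) ^ d - 1 := geom_sum_mul (-L) d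
    have hneg : (-L) ^ d = (0 : Matrix (Fin d) (Fin d) ℚ) := by
      rw [hnegL, smul_pow, hL0, smul_zero]
    rw [hneg] at h1
    have h2 : N * (1 + L) = -((∑ k ∈ Finset.range d, (-L) ^ k) * (-L - 1)) := by
      rw [hN]; noncomm_ring
    rw [h2, h1]
    noncomm_ring
  -- each difference is a determinant with one column replaced
  have key : ∀ q : Fin d,
      Ps s t - Ps s (Function.update t q (t q - 1))
        = c * (A.updateCol q (fun p => (L * W) p q)).det := by
    intro q
    have hupd : (Matrix.of fun p j : Fin d =>
        intChoose (Function.update t q (t q - 1) j) (((p:ℕ):ℤ) - (s j : ℤ)))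
        = A.updateCol q (fun p => W p q) := by
      ext p j
      by_cases hj : j = q
      · subst hj
        simp [Matrix.updateCol_apply, hW, Function.update_self]
      · simp [Matrix.updateCol_apply, hj, hA, Function.update_of_ne hj]
    have hPs1 : Ps s t = c * A.det := rfl
    have hPs2 : Ps s (Function.update t q (t q - 1))
        = c * (A.updateCol q fun p => W p q).det := by
      rw [Ps, hupd, hc]
    rw [hPs1, hPs2, ← mul_sub]
    congr 1
    have hsplit : A.det = (A.updateCol q fun p => W p q).det
        + (A.updateCol q fun p => (L * W) p q).det := by
      have e0 : A.updateCol q ((fun p => W p q) + fun p => (L * W) p q) = A := by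
        rw [show ((fun p => W p q) + fun p => (L * W) p q) = fun p => A p q from
          funext fun p => (hAdd p q).symm]
        exact Matrix.updateCol_eq_self A q
      calc A.det = (A.updateCol q ((fun p => W p q) + fun p => (L * W) p q)).det := by
            rw [e0]
        _ = _ := Matrix.det_updateCol_add A q _ _
    rw [hsplit]
    ring
  rw [Finset.sum_congr rfl (fun q _ => key q), ← Finset.mul_sum]
  have hsum : ∑ q : Fin d, (A.updateCol q fun p => (L * W) p q).det
      = Matrix.trace (A.adjugate * (L * W)) := by
    rw [Matrix.trace]
    apply Finset.sum_congr rfl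
    intro q _
    rw [Matrix.diag_apply, Matrix.mul_apply, ← Matrix.cramer_apply,
      Matrix.cramer_eq_adjugate_mulVec, Matrix.mulVec, dotProduct]
  have hWNA : W = N * A := by
    rw [hAW, ← Matrix.mul_assoc, hNinv, Matrix.one_mul]
  have hWadj : W * A.adjugate = A.det • N := by
    rw [hWNA, Matrix.mul_assoc, Matrix.mul_adjugate, Matrix.mul_smul, Matrix.mul_one]
  have htrLN : Matrix.trace (L * N) = 0 := by
    rw [hN, Finset.mul_sum, Matrix.trace_sum]
    apply Finset.sum_eq_zero
    intro k _
    rw [hnegL, smul_pow, Matrix.mul_smul, Matrix.trace_smul, ← pow_succ', htr k, smul_zero]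
  have htrace : Matrix.trace (A.adjugate * (L * W)) = 0 := by
    rw [Matrix.trace_mul_comm, Matrix.mul_assoc, hWadj, Matrix.mul_smul,
      Matrix.trace_smul, htrLN, smul_zero]
  rw [hsum, htrace, mul_zero]
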